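/- arXiv:1601.06182 — 3 statements merged into one kernel-verified Lean document; each statement's English description precedes it below -/
import Mathlib

section
/- Let n ≥ 1 be a natural number, let f : ℝ × ℝ → ℝ be n times continuously differentiable (ContDiff of order n), and let γ : ℝ → ℝ be n times continuously differentiable. Then the function F : ℝ → ℝ defined by F(s) = ∫_0^{γ(s)} f(s,t) dt (interval integral in t) is n times continuously differentiable on ℝ. -/
open MeasureTheory intervalIntegral

/-! Substituting `t = γ s * u` turns `F s` into `γ s * ∫_0^1 f (s, γ s * u) du`, an integral over a
fixed interval of a `C^n` integrand. Such an integral is `C^n` by induction on `n`: differentiation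
under the integral sign (dominated by a bound of the partial derivative on a compact rectangle)
shows that its derivative is the integral of `∂f/∂s`, which is `C^(n-1)`. -/

section ParametricIntervalIntegral

variable {E : Type*} [NormedAddCommGroup E] [NormedSpace ℝ E] {g : ℝ × ℝ → E}

theorem hasDerivAt_comp_prodMk_left (hg : Differentiable ℝ g) (x t : ℝ) :
    HasDerivAt (fun x => g (x, t)) (fderiv ℝ g (x, t) (1, 0)) x :=
  (hg (x, t)).hasFDerivAt.comp_hasDerivAt x ((hasDerivAt_id x).prodMk (hasDerivAt_const x t))

variable {a b : ℝ}

theorem hasDerivAt_intervalIntegral_of_contDiff_one (hg : ContDiff ℝ 1 g) (x₀ : ℝ) :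
    HasDerivAt (fun s => ∫ u in a..b, g (s, u)) (∫ u in a..b, fderiv ℝ g (x₀, u) (1, 0)) x₀ := by
  have hg'_cont : Continuous fun p => fderiv ℝ g p (1, 0) :=
    (hg.continuous_fderiv one_ne_zero).clm_apply continuous_const
  obtain ⟨C, hC⟩ : ∃ C, ∀ p ∈ Metric.closedBall x₀ 1 ×ˢ Set.uIcc a b,
      ‖fderiv ℝ g p (1, 0)‖ ≤ C :=
    ((isCompact_closedBall x₀ 1).prod isCompact_uIcc).exists_bound_of_continuousOn
      hg'_cont.continuousOn
  refine (hasDerivAt_integral_of_dominated_loc_of_deriv_le (bound := fun _ => C)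
    (Metric.ball_mem_nhds x₀ one_pos)
    (Filter.Eventually.of_forall fun x =>
      (hg.continuous.comp (Continuous.prodMk_right x)).aestronglyMeasurable)
    ((hg.continuous.comp (Continuous.prodMk_right x₀)).intervalIntegrable a b)
    (hg'_cont.comp (Continuous.prodMk_right x₀)).aestronglyMeasurable
    (Filter.Eventually.of_forall fun t ht x hx =>
      hC (x, t) ⟨Metric.ball_subset_closedBall hx, Set.uIoc_subset_uIcc ht⟩)
    intervalIntegrable_const
    (Filter.Eventually.of_forall fun t _ x _ =>
      hasDerivAt_comp_prodMk_left (hg.differentiable one_ne_zero) x t)).2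

theorem contDiff_intervalIntegral_of_contDiff (n : ℕ) (hg : ContDiff ℝ n g) :
    ContDiff ℝ n fun s => ∫ u in a..b, g (s, u) := by
  induction n generalizing g with
  | zero =>
    rw [Nat.cast_zero, contDiff_zero] at hg ⊢
    exact continuous_parametric_intervalIntegral_of_continuous' (f := fun s u => g (s, u)) hg a b
  | succ n ih =>
    have hg_one : ContDiff ℝ 1 g := hg.of_le (by exact_mod_cast Nat.le_add_left 1 n)
    have hderiv : deriv (fun s => ∫ u in a..b, g (s, u)) =
        fun x => ∫ u in a..b, fderiv ℝ g (x, u) (1, 0) :=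
      funext fun x => (hasDerivAt_intervalIntegral_of_contDiff_one hg_one x).deriv
    rw [Nat.cast_succ] at hg ⊢
    rw [contDiff_succ_iff_deriv]
    refine ⟨fun x => (hasDerivAt_intervalIntegral_of_contDiff_one hg_one x).differentiableAt,
      by simp, ?_⟩
    rw [hderiv]
    exact ih ((contDiff_succ_iff_fderiv.1 hg).2.2.clm_apply contDiff_const)

end ParametricIntervalIntegral

theorem contDiff_parametric_integral_variable_upper_limit_general
    (n : ℕ) (f : ℝ × ℝ → ℝ) (hf : ContDiff ℝ n f)
    (γ : ℝ → ℝ) (hγ : ContDiff ℝ n γ) :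
    ContDiff ℝ n (fun s => ∫ t in (0:ℝ)..(γ s), f (s, t)) := by
  have hsubst : ∀ s, ∫ t in (0:ℝ)..(γ s), f (s, t) = γ s • ∫ u in (0:ℝ)..1, f (s, γ s * u) :=
    fun s => by rw [smul_integral_comp_mul_left (fun t => f (s, t))]; simp
  have hintegrand : ContDiff ℝ n fun p : ℝ × ℝ => f (p.1, γ p.1 * p.2) :=
    hf.comp (contDiff_fst.prodMk ((hγ.comp contDiff_fst).mul contDiff_snd))
  simp only [hsubst]
  exact hγ.smul (contDiff_intervalIntegral_of_contDiff n hintegrand)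

/-- If `f : ℝ × ℝ → ℝ` and `γ : ℝ → ℝ` are `n` times continuously differentiable, then
`F s = ∫_0^{γ s} f (s, t) dt` is `n` times continuously differentiable. -/
theorem contDiff_parametric_integral_variable_upper_limit
    (n : ℕ) (hn : 1 ≤ n) (f : ℝ × ℝ → ℝ) (hf : ContDiff ℝ n f)
    (γ : ℝ → ℝ) (hγ : ContDiff ℝ n γ) :
    ContDiff ℝ n (fun s => ∫ t in (0:ℝ)..(γ s), f (s, t)) :=
  contDiff_parametric_integral_variable_upper_limit_general n f hf γ hγ
end

section
/- Let n ≥ 1 be a natural number and let M > 0. Then there exists a constant C depending only on n and M with the following property: for every f : ℝ × ℝ → ℝ that is n times continuously differentiable with ‖iterated derivative of order j of f‖ ≤ M on all of ℝ² for every j ≤ n, and every γ : ℝ → ℝ that is n times continuously differentiable with |γ(s)| ≤ M and |γ^{(j)}(s)| ≤ M for all s ∈ ℝ and all 1 ≤ j ≤ n, the function F(s) = ∫_0^{γ(s)} f(s,t) dt satisfies |F^{(n)}(s)| ≤ C for every s ∈ ℝ. -/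
/-!
The substitution `t = γ s * u` turns `F s` into `∫ u in 0..1, γ s * f (s, γ s * u)`, an integral
over a fixed interval. Differentiating `n` times under the integral sign, `F⁽ⁿ⁾ s` is the integral
over `[0, 1]` of the `n`-th partial derivative in `s` of the new integrand, and on the strip
`|u| ≤ 1` the derivatives of that integrand are bounded in terms of `n` and `M` alone by the
Leibniz rule and the Faà di Bruno bound `norm_iteratedFDeriv_comp_le`.
-/

open MeasureTheory intervalIntegral

section PartialDerivatives

variable {𝕜 F E : Type*} [NontriviallyNormedField 𝕜] [NormedAddCommGroup F] [NormedSpace 𝕜 F]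
  [NormedAddCommGroup E] [NormedSpace 𝕜 E] {n : WithTop ℕ∞} {h : 𝕜 × F → E}

theorem iteratedDeriv_comp_prodMk_const (hh : ContDiff 𝕜 n h) {k : ℕ} (hk : k ≤ n) (s : 𝕜)
    (u : F) :
    iteratedDeriv k (fun s' => h (s', u)) s = iteratedFDeriv 𝕜 k h (s, u) (fun _ => (1, 0)) := by
  have hsection : (fun s' => h (s', u)) =
      (fun p => h (p + (0, u))) ∘ ContinuousLinearMap.inl 𝕜 𝕜 F := by
    ext s'; simp
  have hshift : ContDiff 𝕜 n fun p => h (p + (0, u)) := hh.comp (contDiff_id.add contDiff_const)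
  rw [iteratedDeriv_eq_iteratedFDeriv, hsection,
    ContinuousLinearMap.iteratedFDeriv_comp_right _ hshift _ hk, iteratedFDeriv_comp_add_right]
  simp

theorem continuous_iteratedDeriv_comp_prodMk (hh : ContDiff 𝕜 n h) {k : ℕ} (hk : k ≤ n) :
    Continuous fun p : 𝕜 × F => iteratedDeriv k (fun s => h (s, p.2)) p.1 := by
  simp_rw [iteratedDeriv_comp_prodMk_const hh hk]
  exact (ContinuousMultilinearMap.apply 𝕜 (fun _ : Fin k => 𝕜 × F) E _).continuous.comp
    (hh.continuous_iteratedFDeriv hk)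

theorem norm_iteratedDeriv_comp_prodMk_le (hh : ContDiff 𝕜 n h) {k : ℕ} (hk : k ≤ n) (s : 𝕜)
    (u : F) :
    ‖iteratedDeriv k (fun s' => h (s', u)) s‖ ≤ ‖iteratedFDeriv 𝕜 k h (s, u)‖ := by
  rw [iteratedDeriv_comp_prodMk_const hh hk]
  simpa [Prod.norm_def] using (iteratedFDeriv 𝕜 k h (s, u)).le_opNorm fun _ => (1, 0)

end PartialDerivatives

section ParametricIntegral

variable {E : Type*} [NormedAddCommGroup E] [NormedSpace ℝ E] {n : WithTop ℕ∞}
  {h : ℝ × ℝ → E}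

/-- The integrand's derivative is dominated near `s₀` by its maximum over the compact set
`closedBall s₀ 1 ×ˢ [a, b]`. -/
theorem hasDerivAt_intervalIntegral_iteratedDeriv_comp_prodMk (hh : ContDiff ℝ n h) {k : ℕ}
    (hk : k + 1 ≤ n) (a b s₀ : ℝ) :
    HasDerivAt (fun s => ∫ u in a..b, iteratedDeriv k (fun s' => h (s', u)) s)
      (∫ u in a..b, iteratedDeriv (k + 1) (fun s' => h (s', u)) s₀) s₀ := by
  have hk' : (k : WithTop ℕ∞) ≤ n := le_trans (by exact_mod_cast k.le_succ) hk
  have hcont := continuous_iteratedDeriv_comp_prodMk hh hk'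
  have hcont' := continuous_iteratedDeriv_comp_prodMk hh hk
  obtain ⟨C, hC⟩ :=
    ((isCompact_closedBall s₀ 1).prod (isCompact_uIcc (a := a) (b := b))).exists_bound_of_continuousOn
      hcont'.continuousOn
  have hlt : (k : WithTop ℕ∞) < n := lt_of_lt_of_le (by exact_mod_cast k.lt_succ_self) hk
  refine (hasDerivAt_integral_of_dominated_loc_of_deriv_le (bound := fun _ => C)
    (Metric.ball_mem_nhds s₀ one_pos)
    (Filter.Eventually.of_forall fun s =>
      (hcont.comp (continuous_const.prodMk continuous_id)).aestronglyMeasurable)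
    ((hcont.comp (continuous_const.prodMk continuous_id)).intervalIntegrable _ _)
    (hcont'.comp (continuous_const.prodMk continuous_id)).aestronglyMeasurable
    (Filter.Eventually.of_forall fun u hu s hs =>
      hC (s, u) ⟨Metric.ball_subset_closedBall hs, Set.uIoc_subset_uIcc hu⟩)
    intervalIntegrable_const
    (Filter.Eventually.of_forall fun u _ s _ => ?_)).2
  rw [iteratedDeriv_succ]
  exact ((hh.comp (contDiff_id.prodMk contDiff_const)).differentiable_iteratedDeriv k hlt
    s).hasDerivAt

theorem iteratedDeriv_intervalIntegral_comp_prodMk (hh : ContDiff ℝ n h) {k : ℕ} (hk : k ≤ n)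
    (a b : ℝ) :
    iteratedDeriv k (fun s => ∫ u in a..b, h (s, u)) =
      fun s => ∫ u in a..b, iteratedDeriv k (fun s' => h (s', u)) s := by
  induction k with
  | zero => simp
  | succ k ih =>
    rw [iteratedDeriv_succ, ih (le_trans (by exact_mod_cast k.le_succ) hk)]
    exact funext fun s => (hasDerivAt_intervalIntegral_iteratedDeriv_comp_prodMk hh hk a b s).deriv

theorem norm_iteratedDeriv_intervalIntegral_comp_prodMk_le (hh : ContDiff ℝ n h) {k : ℕ}
    (hk : k ≤ n) {a b B : ℝ} (s : ℝ) (hB : ∀ u ∈ Set.uIoc a b, ‖iteratedFDeriv ℝ k h (s, u)‖ ≤ B) :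
    ‖iteratedDeriv k (fun s' => ∫ u in a..b, h (s', u)) s‖ ≤ B * |b - a| := by
  rw [iteratedDeriv_intervalIntegral_comp_prodMk hh hk]
  exact norm_integral_le_of_norm_le_const fun u hu =>
    (norm_iteratedDeriv_comp_prodMk_le hh hk s u).trans (hB u hu)

end ParametricIntegral

section DerivativeBounds

variable {𝕜 E F G : Type*} [NontriviallyNormedField 𝕜] [NormedAddCommGroup E] [NormedSpace 𝕜 E]
  [NormedAddCommGroup F] [NormedSpace 𝕜 F] [NormedAddCommGroup G] [NormedSpace 𝕜 G]

theorem ContinuousLinearMap.norm_iteratedFDeriv_le (L : E →L[𝕜] F) {i : ℕ} (hi : 1 ≤ i) (x : E) :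
    ‖iteratedFDeriv 𝕜 i L x‖ ≤ ‖L‖ := by
  obtain ⟨k, rfl⟩ : ∃ k, i = k + 1 := ⟨i - 1, by omega⟩
  rw [← norm_iteratedFDeriv_fderiv, funext fun y => L.fderiv (x := y)]
  rcases k with _ | k
  · simp
  · simp [iteratedFDeriv_const_of_ne]

theorem ContinuousLinearMap.norm_iteratedFDeriv_comp_right_le (L : G →L[𝕜] E) {f : E → F}
    {n : WithTop ℕ∞} (hf : ContDiff 𝕜 n f) (x : G) {i : ℕ} (hi : i ≤ n) :
    ‖iteratedFDeriv 𝕜 i (f ∘ L) x‖ ≤ ‖iteratedFDeriv 𝕜 i f (L x)‖ * ‖L‖ ^ i := by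
  rw [L.iteratedFDeriv_comp_right hf x hi]
  simpa using (iteratedFDeriv 𝕜 i f (L x)).norm_compContinuousLinearMap_le fun _ => L

variable {A : Type*} [NormedRing A] [NormedAlgebra 𝕜 A] {N : WithTop ℕ∞} {n : ℕ}

theorem norm_iteratedFDeriv_mul_le_of_forall_le {f g : E → A} (hf : ContDiff 𝕜 N f)
    (hg : ContDiff 𝕜 N g) (hn : n ≤ N) {x : E} {B C : ℝ}
    (hB : ∀ i ≤ n, ‖iteratedFDeriv 𝕜 i f x‖ ≤ B) (hC : ∀ i ≤ n, ‖iteratedFDeriv 𝕜 i g x‖ ≤ C)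
    {j : ℕ} (hj : j ≤ n) :
    ‖iteratedFDeriv 𝕜 j (fun y => f y * g y) x‖ ≤ 2 ^ n * B * C := by
  have hB0 : 0 ≤ B := (norm_nonneg _).trans (hB 0 (Nat.zero_le _))
  calc ‖iteratedFDeriv 𝕜 j (fun y => f y * g y) x‖
      ≤ ∑ i ∈ Finset.range (j + 1), (j.choose i : ℝ) * ‖iteratedFDeriv 𝕜 i f x‖ *
          ‖iteratedFDeriv 𝕜 (j - i) g x‖ :=
        norm_iteratedFDeriv_mul_le hf hg x (le_trans (by exact_mod_cast hj) hn)
    _ ≤ ∑ i ∈ Finset.range (j + 1), (j.choose i : ℝ) * B * C := by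
        refine Finset.sum_le_sum fun i hi => ?_
        have hij : i ≤ j := Nat.lt_succ_iff.mp (Finset.mem_range.mp hi)
        gcongr
        exacts [hB i (hij.trans hj), hC (j - i) ((Nat.sub_le j i).trans hj)]
    _ = 2 ^ j * B * C := by
        rw [← Finset.sum_mul, ← Finset.sum_mul, ← Nat.cast_sum, Nat.sum_range_choose]
        push_cast; ring
    _ ≤ 2 ^ n * B * C := by
        have hC0 : 0 ≤ C := (norm_nonneg _).trans (hC 0 (Nat.zero_le _))
        gcongr
        exact one_le_two

theorem norm_iteratedFDeriv_comp_le_of_forall_le {g : F → G} {f : E → F} (hg : ContDiff 𝕜 N g)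
    (hf : ContDiff 𝕜 N f) (hn : n ≤ N) {x : E} {C D : ℝ}
    (hC : ∀ i ≤ n, ‖iteratedFDeriv 𝕜 i g (f x)‖ ≤ C) (hD1 : 1 ≤ D)
    (hD : ∀ i, 1 ≤ i → i ≤ n → ‖iteratedFDeriv 𝕜 i f x‖ ≤ D) {j : ℕ} (hj : j ≤ n) :
    ‖iteratedFDeriv 𝕜 j (g ∘ f) x‖ ≤ (n.factorial : ℝ) * C * D ^ n := by
  have hC0 : 0 ≤ C := (norm_nonneg _).trans (hC 0 (Nat.zero_le _))
  calc ‖iteratedFDeriv 𝕜 j (g ∘ f) x‖ ≤ (j.factorial : ℝ) * C * D ^ j :=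
        norm_iteratedFDeriv_comp_le hg hf (le_trans (by exact_mod_cast hj) hn) x
          (fun i hi => hC i (hi.trans hj))
          (fun i h1 h2 => (hD i h1 (h2.trans hj)).trans (le_self_pow₀ hD1 (by omega)))
    _ ≤ (n.factorial : ℝ) * C * D ^ n := by
        gcongr

end DerivativeBounds

section PartialArea

noncomputable def rescaledIntegrand (f : ℝ × ℝ → ℝ) (γ : ℝ → ℝ) (q : ℝ × ℝ) : ℝ :=
  γ q.1 * f (q.1, γ q.1 * q.2)

variable {f : ℝ × ℝ → ℝ} {γ : ℝ → ℝ}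

theorem intervalIntegral_eq_integral_rescaledIntegrand (f : ℝ × ℝ → ℝ) (γ : ℝ → ℝ) (s : ℝ) :
    ∫ t in (0 : ℝ)..γ s, f (s, t) = ∫ u in (0 : ℝ)..1, rescaledIntegrand f γ (s, u) := by
  simpa [rescaledIntegrand, intervalIntegral.integral_const_mul] using
    (smul_integral_comp_mul_left (fun t => f (s, t)) (γ s) (a := 0) (b := 1)).symm

theorem contDiff_rescaledIntegrand {n : WithTop ℕ∞} (hf : ContDiff ℝ n f) (hγ : ContDiff ℝ n γ) :
    ContDiff ℝ n (rescaledIntegrand f γ) :=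
  (hγ.comp contDiff_fst).mul
    (hf.comp (contDiff_fst.prodMk ((hγ.comp contDiff_fst).mul contDiff_snd)))

theorem norm_iteratedFDeriv_rescaledIntegrand_le {n : ℕ} {M : ℝ} (hf : ContDiff ℝ n f)
    (hfM : ∀ i ≤ n, ∀ p, ‖iteratedFDeriv ℝ i f p‖ ≤ M) (hγ : ContDiff ℝ n γ)
    (hγM : ∀ i ≤ n, ∀ s, ‖iteratedFDeriv ℝ i γ s‖ ≤ M) {p : ℝ × ℝ} (hp : |p.2| ≤ 1) {j : ℕ}
    (hj : j ≤ n) :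
    ‖iteratedFDeriv ℝ j (rescaledIntegrand f γ) p‖ ≤
      2 ^ n * M * ((n.factorial : ℝ) * M * max 1 (2 ^ n * M) ^ n) := by
  have hM : 0 ≤ M := (norm_nonneg _).trans (hγM 0 (Nat.zero_le n) 0)
  have hγfst : ContDiff ℝ n fun q : ℝ × ℝ => γ q.1 := hγ.comp contDiff_fst
  have hψ : ContDiff ℝ n fun q : ℝ × ℝ => γ q.1 * q.2 := hγfst.mul contDiff_snd
  have hφ : ContDiff ℝ n fun q : ℝ × ℝ => (q.1, γ q.1 * q.2) := contDiff_fst.prodMk hψ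
  have hγfst_le : ∀ i ≤ n, ‖iteratedFDeriv ℝ i (fun q : ℝ × ℝ => γ q.1) p‖ ≤ M := fun i hi =>
    calc ‖iteratedFDeriv ℝ i (γ ∘ ContinuousLinearMap.fst ℝ ℝ ℝ) p‖
        ≤ ‖iteratedFDeriv ℝ i γ p.1‖ * ‖ContinuousLinearMap.fst ℝ ℝ ℝ‖ ^ i :=
          (ContinuousLinearMap.fst ℝ ℝ ℝ).norm_iteratedFDeriv_comp_right_le hγ p
            (by exact_mod_cast hi)
      _ ≤ M * 1 := by
          gcongr
          exacts [hγM i hi p.1, pow_le_one₀ (norm_nonneg _) (ContinuousLinearMap.norm_fst_le ℝ ℝ ℝ)]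
      _ = M := mul_one M
  have hsnd_le : ∀ i ≤ n, ‖iteratedFDeriv ℝ i (fun q : ℝ × ℝ => q.2) p‖ ≤ 1 := by
    rintro (_ | i) -
    · simpa using hp
    · exact ((ContinuousLinearMap.snd ℝ ℝ ℝ).norm_iteratedFDeriv_le (Nat.le_add_left 1 i) p).trans
        (ContinuousLinearMap.norm_snd_le ℝ ℝ ℝ)
  have hφ_le : ∀ i, 1 ≤ i → i ≤ n →
      ‖iteratedFDeriv ℝ i (fun q : ℝ × ℝ => (q.1, γ q.1 * q.2)) p‖ ≤ max 1 (2 ^ n * M) := by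
    intro i h1 hi
    rw [iteratedFDeriv_prodMk contDiff_fst.contDiffAt hψ.contDiffAt (by exact_mod_cast hi),
      ContinuousMultilinearMap.opNorm_prod]
    refine max_le_max (((ContinuousLinearMap.fst ℝ ℝ ℝ).norm_iteratedFDeriv_le h1 p).trans
      (ContinuousLinearMap.norm_fst_le ℝ ℝ ℝ)) ?_
    simpa using norm_iteratedFDeriv_mul_le_of_forall_le hγfst contDiff_snd le_rfl hγfst_le
      hsnd_le hi
  have hcomp_le : ∀ i ≤ n, ‖iteratedFDeriv ℝ i (fun q : ℝ × ℝ => f (q.1, γ q.1 * q.2)) p‖ ≤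
      (n.factorial : ℝ) * M * max 1 (2 ^ n * M) ^ n := fun i hi =>
    norm_iteratedFDeriv_comp_le_of_forall_le hf hφ le_rfl (fun i hi => hfM i hi _)
      (le_max_left _ _) hφ_le hi
  exact norm_iteratedFDeriv_mul_le_of_forall_le hγfst (hf.comp hφ) le_rfl hγfst_le hcomp_le hj

end PartialArea

theorem iteratedDeriv_parametric_integral_bound_general
    (n : ℕ) (M : ℝ) :
    ∃ C : ℝ, ∀ (f : ℝ × ℝ → ℝ) (γ : ℝ → ℝ),
      ContDiff ℝ n f →
      (∀ j : ℕ, j ≤ n → ∀ p : ℝ × ℝ, ‖iteratedFDeriv ℝ j f p‖ ≤ M) →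
      ContDiff ℝ n γ →
      (∀ s : ℝ, |γ s| ≤ M) →
      (∀ j : ℕ, 1 ≤ j → j ≤ n → ∀ s : ℝ, |iteratedDeriv j γ s| ≤ M) →
      ∀ s : ℝ,
        |iteratedDeriv n (fun s' => ∫ t in (0:ℝ)..(γ s'), f (s', t)) s| ≤ C := by
  refine ⟨2 ^ n * M * ((n.factorial : ℝ) * M * max 1 (2 ^ n * M) ^ n), ?_⟩
  intro f γ hf hfM hγ hγ0 hγM s
  have hγ_le : ∀ i ≤ n, ∀ s, ‖iteratedFDeriv ℝ i γ s‖ ≤ M := by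
    rintro (_ | i) hi s
    · simpa using hγ0 s
    · simpa [norm_iteratedFDeriv_eq_norm_iteratedDeriv] using hγM (i + 1) (by omega) hi s
  simp_rw [intervalIntegral_eq_integral_rescaledIntegrand f γ]
  simpa using norm_iteratedDeriv_intervalIntegral_comp_prodMk_le
    (contDiff_rescaledIntegrand hf hγ) le_rfl (a := 0) (b := 1) s fun u hu => by
      rw [Set.uIoc_of_le zero_le_one] at hu
      exact norm_iteratedFDeriv_rescaledIntegrand_le hf hfM hγ hγ_le
        (abs_le.mpr ⟨by linarith [hu.1], hu.2⟩) le_rfl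

/-- Uniform bound on the `n`-th derivative of the partial area function
`F s = ∫_0^{γ s} f (s, t) dt`, given uniform bounds on the derivatives of `f` and `γ`. -/
theorem iteratedDeriv_parametric_integral_bound
    (n : ℕ) (hn : 1 ≤ n) (M : ℝ) (hM : 0 < M) :
    ∃ C : ℝ, ∀ (f : ℝ × ℝ → ℝ) (γ : ℝ → ℝ),
      ContDiff ℝ n f →
      (∀ j : ℕ, j ≤ n → ∀ p : ℝ × ℝ, ‖iteratedFDeriv ℝ j f p‖ ≤ M) →
      ContDiff ℝ n γ →
      (∀ s : ℝ, |γ s| ≤ M) →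
      (∀ j : ℕ, 1 ≤ j → j ≤ n → ∀ s : ℝ, |iteratedDeriv j γ s| ≤ M) →
      ∀ s : ℝ,
        |iteratedDeriv n (fun s' => ∫ t in (0:ℝ)..(γ s'), f (s', t)) s| ≤ C :=
  iteratedDeriv_parametric_integral_bound_general n M
end

section
/- Let a < b, let γ : ℝ → ℝ be continuously differentiable with γ(s) > 0 for all s ∈ [a,b], and let F₁, F₂ : ℝ² → ℝ be continuously differentiable. Let Q = {(s,t) ∈ ℝ² : a ≤ s ≤ b, 0 ≤ t ≤ γ(s)}. Then ∫_Q (∂F₁/∂x + ∂F₂/∂y) dA = ∫_a^b [F₂(s, γ(s)) − γ'(s) F₁(s, γ(s))] ds − ∫_a^b F₂(s, 0) ds + ∫_0^{γ(b)} F₁(b, t) dt − ∫_0^{γ(a)} F₁(a, t) dt, where dA is two-dimensional Lebesgue measure. -/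
/-!
Fubini over the vertical fibres turns the area integral into
`∫ₐᵇ ∫₀^{γ s} div F (s, t) dt ds`. In `t`, `∂F₂/∂y` integrates to `F₂ (s, γ s) - F₂ (s, 0)`.
For the `∂F₁/∂x` part, Leibniz's rule for a moving upper limit gives
`∫₀^{γ s} ∂F₁/∂x (s, t) dt = d/ds ∫₀^{γ s} F₁ (s, t) dt - γ' s * F₁ (s, γ s)`,
and integrating this over `[a, b]` produces the two vertical sides.
-/

open MeasureTheory intervalIntegral Set

section PartialDerivatives

variable {E : Type*} [NormedAddCommGroup E] [NormedSpace ℝ E] {F : ℝ × ℝ → E}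

theorem DifferentiableAt.hasDerivAt_comp_prodMk_left {x y : ℝ}
    (hF : DifferentiableAt ℝ F (x, y)) :
    HasDerivAt (fun x => F (x, y)) (fderiv ℝ F (x, y) (1, 0)) x :=
  hF.hasFDerivAt.comp_hasDerivAt x ((hasDerivAt_id x).prodMk (hasDerivAt_const x y))

theorem DifferentiableAt.hasDerivAt_comp_prodMk_right {x y : ℝ}
    (hF : DifferentiableAt ℝ F (x, y)) :
    HasDerivAt (fun y => F (x, y)) (fderiv ℝ F (x, y) (0, 1)) y :=
  hF.hasFDerivAt.comp_hasDerivAt y ((hasDerivAt_const y x).prodMk (hasDerivAt_id y))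

theorem ContDiff.continuous_fderiv_apply_const (hF : ContDiff ℝ 1 F) (v : ℝ × ℝ) :
    Continuous fun p => fderiv ℝ F p v :=
  (hF.continuous_fderiv one_ne_zero).clm_apply continuous_const

theorem ContDiff.integral_fderiv_snd_eq_sub [CompleteSpace E] (hF : ContDiff ℝ 1 F)
    (x c d : ℝ) :
    ∫ t in c..d, fderiv ℝ F (x, t) (0, 1) = F (x, d) - F (x, c) :=
  integral_eq_sub_of_hasDerivAt
    (fun t _ => (hF.differentiable one_ne_zero (x, t)).hasDerivAt_comp_prodMk_right)
    ((hF.continuous_fderiv_apply_const (0, 1)).comp (.prodMk_right x) |>.intervalIntegrable _ _)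

theorem ContDiff.hasDerivAt_intervalIntegral_param (hF : ContDiff ℝ 1 F) (c d x₀ : ℝ) :
    HasDerivAt (fun x => ∫ t in c..d, F (x, t))
      (∫ t in c..d, fderiv ℝ F (x₀, t) (1, 0)) x₀ := by
  have hFx := hF.continuous_fderiv_apply_const (1, 0)
  obtain ⟨C, hC⟩ := ((isCompact_closedBall x₀ 1).prod (isCompact_uIcc (a := c) (b := d)))
    |>.exists_bound_of_continuousOn hFx.continuousOn
  refine (hasDerivAt_integral_of_dominated_loc_of_deriv_le (μ := volume)
    (F := fun x t => F (x, t)) (F' := fun x t => fderiv ℝ F (x, t) (1, 0))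
    (bound := fun _ => C) (Metric.closedBall_mem_nhds x₀ one_pos) ?_ ?_ ?_ ?_
    intervalIntegrable_const ?_).2
  · exact .of_forall fun x => (hF.continuous.comp (.prodMk_right x)).aestronglyMeasurable
  · exact (hF.continuous.comp (.prodMk_right x₀)).intervalIntegrable _ _
  · exact (hFx.comp (.prodMk_right x₀)).aestronglyMeasurable
  · exact .of_forall fun t ht x hx => hC (x, t) ⟨hx, uIoc_subset_uIcc ht⟩
  · exact .of_forall fun t _ x _ =>
      (hF.differentiable one_ne_zero (x, t)).hasDerivAt_comp_prodMk_left

-- Both partial derivatives of `(x, y) ↦ ∫ t in c..y, F (x, t)` are continuous.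
theorem ContDiff.hasStrictFDerivAt_intervalIntegral_param [CompleteSpace E]
    (hF : ContDiff ℝ 1 F) (c : ℝ) (p : ℝ × ℝ) :
    HasStrictFDerivAt (fun p : ℝ × ℝ => ∫ t in c..p.2, F (p.1, t))
      ((ContinuousLinearMap.toSpanSingleton ℝ
          (∫ t in c..p.2, fderiv ℝ F (p.1, t) (1, 0))).coprod
        (ContinuousLinearMap.toSpanSingleton ℝ (F p))) p := by
  have hcont : ∀ g : ℝ × ℝ → E, Continuous g →
      Continuous fun q => ContinuousLinearMap.toSpanSingleton ℝ (g q) :=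
    fun _ hg => (ContinuousLinearMap.toSpanSingletonCLE (𝕜 := ℝ) (E := E)).continuous.comp hg
  refine hasStrictFDerivAt_uncurry_coprod (f := fun x y => ∫ t in c..y, F (x, t))
    (f₁ := fun x y => .toSpanSingleton ℝ (∫ t in c..y, fderiv ℝ F (x, t) (1, 0)))
    (f₂ := fun x y => .toSpanSingleton ℝ (F (x, y)))
    (.of_forall fun q => (hF.hasDerivAt_intervalIntegral_param c q.2 q.1).hasFDerivAt)
    (.of_forall fun q => ((hF.continuous.comp (.prodMk_right q.1)).integral_hasStrictDerivAt
      c q.2).hasDerivAt.hasFDerivAt) ?_ ?_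
  · exact (hcont _ (continuous_parametric_primitive_of_continuous
      (f := fun x t => fderiv ℝ F (x, t) (1, 0))
      (hF.continuous_fderiv_apply_const (1, 0)))).continuousAt
  · exact (hcont _ hF.continuous).continuousAt

theorem ContDiff.hasDerivAt_intervalIntegral_comp [CompleteSpace E] (hF : ContDiff ℝ 1 F)
    (c : ℝ) {γ : ℝ → ℝ} {γ' x : ℝ} (hγ : HasDerivAt γ γ' x) :
    HasDerivAt (fun x => ∫ t in c..γ x, F (x, t))
      ((∫ t in c..γ x, fderiv ℝ F (x, t) (1, 0)) + γ' • F (x, γ x)) x := by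
  have := (hF.hasStrictFDerivAt_intervalIntegral_param c (x, γ x)).hasFDerivAt.comp_hasDerivAt x
    ((hasDerivAt_id x).prodMk hγ)
  simpa [Function.comp_def] using this

end PartialDerivatives

section ClosedRegionBetween

-- The closed counterpart of `regionBetween`, which uses `Ioo`.
def closedRegionBetween {α : Type*} (φ ψ : α → ℝ) (s : Set α) : Set (α × ℝ) :=
  {p | p.1 ∈ s ∧ p.2 ∈ Icc (φ p.1) (ψ p.1)}

variable {α : Type*} {φ ψ : α → ℝ} {s : Set α}

theorem isCompact_closedRegionBetween [TopologicalSpace α] (hs : IsCompact s)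
    (hφ : Continuous φ) (hψ : Continuous ψ) : IsCompact (closedRegionBetween φ ψ s) := by
  obtain ⟨m, hm⟩ := hs.bddBelow_image hφ.continuousOn
  obtain ⟨M, hM⟩ := hs.bddAbove_image hψ.continuousOn
  have hR : closedRegionBetween φ ψ s =
      s ×ˢ Icc m M ∩ {p | φ p.1 ≤ p.2 ∧ p.2 ≤ ψ p.1} := by
    ext ⟨x, y⟩
    constructor
    · rintro ⟨hx, hφy, hyψ⟩
      exact ⟨⟨hx, (hm (mem_image_of_mem φ hx)).trans hφy,
        hyψ.trans (hM (mem_image_of_mem ψ hx))⟩, hφy, hyψ⟩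
    · rintro ⟨⟨hx, -⟩, hy⟩
      exact ⟨hx, hy⟩
  rw [hR]
  exact (hs.prod isCompact_Icc).inter_right
    ((isClosed_le (hφ.comp continuous_fst) continuous_snd).inter
      (isClosed_le continuous_snd (hψ.comp continuous_fst)))

theorem indicator_closedRegionBetween_apply {E : Type*} [Zero E] (f : α × ℝ → E) (x : α)
    (y : ℝ) :
    (closedRegionBetween φ ψ s).indicator f (x, y) =
      s.indicator (fun x => (Icc (φ x) (ψ x)).indicator (fun y => f (x, y)) y) x := by
  by_cases hx : x ∈ s
  · rw [indicator_of_mem hx]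
    by_cases hy : y ∈ Icc (φ x) (ψ x)
    · rw [indicator_of_mem hy,
        indicator_of_mem (show (x, y) ∈ closedRegionBetween φ ψ s from ⟨hx, hy⟩)]
    · rw [indicator_of_notMem hy, indicator_of_notMem fun h => hy h.2]
  · rw [indicator_of_notMem hx, indicator_of_notMem fun h => hx h.1]

theorem setIntegral_closedRegionBetween {E : Type*} [NormedAddCommGroup E] [NormedSpace ℝ E]
    [MeasurableSpace α] {μ : Measure α} [SFinite μ] {f : α × ℝ → E} (hs : MeasurableSet s)
    (hR : MeasurableSet (closedRegionBetween φ ψ s)) (hφψ : ∀ x ∈ s, φ x ≤ ψ x)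
    (hf : IntegrableOn f (closedRegionBetween φ ψ s) (μ.prod volume)) :
    ∫ p in closedRegionBetween φ ψ s, f p ∂μ.prod volume =
      ∫ x in s, (∫ y in φ x..ψ x, f (x, y)) ∂μ := by
  rw [← MeasureTheory.integral_indicator hR, integral_prod _ ((integrable_indicator_iff hR).2 hf),
    ← setIntegral_congr_fun hs fun x hx => by
      rw [intervalIntegral.integral_of_le (hφψ x hx), ← integral_Icc_eq_integral_Ioc,
        ← MeasureTheory.integral_indicator measurableSet_Icc],
    ← MeasureTheory.integral_indicator hs]
  simp only [indicator_closedRegionBetween_apply]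
  congr 1; funext x
  by_cases hx : x ∈ s <;> simp [hx]

end ClosedRegionBetween

theorem setIntegral_closedRegionBetween_Icc {E : Type*} [NormedAddCommGroup E]
    [NormedSpace ℝ E] {f : ℝ × ℝ → E} {φ ψ : ℝ → ℝ} {a b : ℝ} (hab : a ≤ b)
    (hφ : Continuous φ) (hψ : Continuous ψ) (hφψ : ∀ x ∈ Icc a b, φ x ≤ ψ x)
    (hf : ContinuousOn f (closedRegionBetween φ ψ (Icc a b))) :
    ∫ p in closedRegionBetween φ ψ (Icc a b), f p =
      ∫ x in a..b, ∫ y in φ x..ψ x, f (x, y) := by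
  have hR := isCompact_closedRegionBetween (isCompact_Icc (a := a) (b := b)) hφ hψ
  rw [Measure.volume_eq_prod, setIntegral_closedRegionBetween measurableSet_Icc
    hR.measurableSet hφψ (hf.integrableOn_compact hR), intervalIntegral.integral_of_le hab,
    integral_Icc_eq_integral_Ioc]

/-- Green's (divergence) identity for a region `Q` below the graph of a positive `C¹`
function `γ` over `[a,b]`: the integral of the divergence of `(F₁, F₂)` over `Q` equals
the corresponding boundary integrals over the graph, the bottom edge, and the two
vertical sides. -/
theorem divergence_identity_graph_domain
    (a b : ℝ) (hab : a < b)
    (γ : ℝ → ℝ) (hγ : ContDiff ℝ 1 γ) (hγpos : ∀ s ∈ Set.Icc a b, 0 < γ s)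
    (F₁ F₂ : ℝ × ℝ → ℝ) (hF₁ : ContDiff ℝ 1 F₁) (hF₂ : ContDiff ℝ 1 F₂)
    (Q : Set (ℝ × ℝ))
    (hQ : Q = {p : ℝ × ℝ | a ≤ p.1 ∧ p.1 ≤ b ∧ 0 ≤ p.2 ∧ p.2 ≤ γ p.1}) :
    ∫ p in Q, (fderiv ℝ F₁ p (1, 0) + fderiv ℝ F₂ p (0, 1)) =
      (∫ s in a..b, (F₂ (s, γ s) - deriv γ s * F₁ (s, γ s))) -
        (∫ s in a..b, F₂ (s, 0)) +
        (∫ t in (0:ℝ)..(γ b), F₁ (b, t)) - ∫ t in (0:ℝ)..(γ a), F₁ (a, t) := by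
  have hQR : Q = closedRegionBetween 0 γ (Icc a b) := by
    rw [hQ]; ext; simp [closedRegionBetween, and_assoc]
  have hinner : ∀ s,
      ∫ t in (0:ℝ)..γ s, (fderiv ℝ F₁ (s, t) (1, 0) + fderiv ℝ F₂ (s, t) (0, 1)) =
      ((∫ t in (0:ℝ)..γ s, fderiv ℝ F₁ (s, t) (1, 0)) + deriv γ s * F₁ (s, γ s)) +
        (F₂ (s, γ s) - deriv γ s * F₁ (s, γ s)) - F₂ (s, 0) := fun s => by
    rw [intervalIntegral.integral_add (by apply Continuous.intervalIntegrable; fun_prop)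
      (by apply Continuous.intervalIntegrable; fun_prop), hF₂.integral_fderiv_snd_eq_sub]
    ring
  have hsides : ∫ s in a..b,
      ((∫ t in (0:ℝ)..γ s, fderiv ℝ F₁ (s, t) (1, 0)) + deriv γ s * F₁ (s, γ s)) =
        (∫ t in (0:ℝ)..γ b, F₁ (b, t)) - ∫ t in (0:ℝ)..γ a, F₁ (a, t) :=
    integral_eq_sub_of_hasDerivAt (fun s _ =>
      hF₁.hasDerivAt_intervalIntegral_comp 0 (hγ.differentiable one_ne_zero s).hasDerivAt)
      (by apply Continuous.intervalIntegrable; fun_prop)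
  rw [hQR, setIntegral_closedRegionBetween_Icc hab.le continuous_zero hγ.continuous
      (fun s hs => (hγpos s hs).le) (by fun_prop)]
  simp only [Pi.zero_apply]
  rw [integral_congr fun s _ => hinner s, intervalIntegral.integral_sub,
    intervalIntegral.integral_add, hsides]
  · ring
  all_goals apply Continuous.intervalIntegrable; fun_prop
end
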